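/- Deterministic evaluation-error bound (core of Lemma B.6). In the finite episodic MDP setting with true transitions P, fix a second collection of kernels P̂ on the same (𝒮,𝒜,H), reals δ > 0, C ≥ 0, B ≥ 0, and distributions μ_h ∈ Δ(𝒮×𝒜) for h ∈ {1,…,H}. Assume: (i) for every h and every (s,a) with sup_{π'} d_h^{π'}(s,a) ≥ δ (occupancies under the true P), one has sup_{π'} d_h^{π'}(s,a) ≤ C·μ_h(s,a); (ii) for every h and every function G : 𝒮 → [0,H], Σ_{(s,a)} μ_h(s,a)·(Σ_{s'} (P̂_h(s'|s,a) − P_h(s'|s,a)) G(s'))² ≤ B. Then for every policy π and every reward function r with r_h(s,a) ∈ [0,1]: |Ĵ(π;r) − J(π;r)| ≤ H·√(C·B) + S·A·H²·δ, where J, Ĵ are the returns of π under P and P̂ respectively. -/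

import Mathlib

/-!
Telescoping the Bellman equations along the state distributions of `π` under the true
kernels `P` (the simulation lemma) writes `Ĵ(π;r) − J(π;r)` as
`∑ₕ 𝔼_{d_h^π}[(P̂_h − P_h) V̂_{h+1}^π]`, where `V̂_{h+1}^π` takes values in `[0, H]`, so every
integrand is bounded by `H`. At each step, split the state-action pairs according to whether
`sup_{π'} d_h^{π'}(s,a) ≥ δ`. On the pairs that are reached with probability at least `δ` by
some policy, `d_h^π ≤ C μ_h`, and Cauchy–Schwarz against the concentration bound gives
`√(C B)`; each of the at most `S A` remaining pairs has `d_h^π(s,a) < δ` and contributes at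
most `δ H`.
-/

open Finset

/-- A (non-stationary) policy for a finite episodic MDP. -/
structure EpiPolicy (S A : Type) [Fintype A] where
  p : S → ℕ → A → ℝ
  nonneg : ∀ s h a, 0 ≤ p s h a
  sum_one : ∀ s h, ∑ a, p s h a = 1

/-- Step-`h` state-action occupancy measure (0-indexed: `occ P μ π h` is `d_{h+1}^π`). -/
noncomputable def occ {S A : Type} [Fintype S] [Fintype A]
    (P : ℕ → S → A → S → ℝ) (μ : S → ℝ) (π : EpiPolicy S A) : ℕ → S × A → ℝ
  | 0 => fun q => μ q.1 * π.p q.1 0 q.2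
  | h + 1 => fun q =>
      ∑ q' : S × A, occ P μ π h q' * P h q'.1 q'.2 q.1 * π.p q.1 (h + 1) q.2

/-- `valAux P r π k h s`: value of `π` at state `s` and (0-indexed) step `h` with `k`
steps remaining; the return of a horizon-`H` MDP is `∑ s, μ s * valAux P r π H 0 s`. -/
noncomputable def valAux {S A : Type} [Fintype S] [Fintype A]
    (P : ℕ → S → A → S → ℝ) (r : ℕ → S → A → ℝ) (π : EpiPolicy S A) :
    ℕ → ℕ → S → ℝ
  | 0, _, _ => 0
  | k + 1, h, s =>
      ∑ a, π.p s h a * (r h s a + ∑ s', P h s a s' * valAux P r π k (h + 1) s')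

lemma sum_mul_mem_Icc_of_sum_eq_one {ι : Type*} [Fintype ι] {p f : ι → ℝ} {M : ℝ}
    (hp : ∀ i, 0 ≤ p i) (hp1 : ∑ i, p i = 1) (hf : ∀ i, f i ∈ Set.Icc 0 M) :
    ∑ i, p i * f i ∈ Set.Icc 0 M := by
  refine ⟨sum_nonneg fun i _ => mul_nonneg (hp i) (hf i).1, ?_⟩
  calc ∑ i, p i * f i ≤ ∑ i, p i * M :=
        sum_le_sum fun i _ => mul_le_mul_of_nonneg_left (hf i).2 (hp i)
    _ = M := by rw [← sum_mul, hp1, one_mul]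

lemma abs_sum_sub_mul_le_of_sum_eq_one {ι : Type*} [Fintype ι] {p q f : ι → ℝ} {M : ℝ}
    (hp : ∀ i, 0 ≤ p i) (hp1 : ∑ i, p i = 1) (hq : ∀ i, 0 ≤ q i) (hq1 : ∑ i, q i = 1)
    (hf : ∀ i, f i ∈ Set.Icc 0 M) :
    |∑ i, (p i - q i) * f i| ≤ M := by
  obtain ⟨hpf0, hpfM⟩ := sum_mul_mem_Icc_of_sum_eq_one hp hp1 hf
  obtain ⟨hqf0, hqfM⟩ := sum_mul_mem_Icc_of_sum_eq_one hq hq1 hf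
  simpa only [sub_mul, sum_sub_distrib] using abs_sub_le_of_nonneg_of_le hpf0 hpfM hqf0 hqfM

lemma abs_sum_mul_le_sqrt_add_card_mul {ι : Type*} [Fintype ι] {d x ν : ι → ℝ}
    {C B M δ : ℝ} (hd : ∀ i, 0 ≤ d i) (hd1 : ∑ i, d i ≤ 1) (hν : ∀ i, 0 ≤ ν i)
    (hC : 0 ≤ C) (hM : 0 ≤ M) (hδ : 0 ≤ δ) (hdom : ∀ i, d i ≤ δ ∨ d i ≤ C * ν i)
    (hx : ∀ i, |x i| ≤ M) (hB : ∑ i, ν i * x i ^ 2 ≤ B) :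
    |∑ i, d i * x i| ≤ √(C * B) + Fintype.card ι * M * δ := by
  classical
  set big := univ.filter fun i => d i ≤ C * ν i
  have hbig : |∑ i ∈ big, d i * x i| ≤ √(C * B) := by
    refine Real.abs_le_sqrt ?_
    have hweight : ∑ i ∈ big, d i * x i ^ 2 ≤ C * B :=
      calc ∑ i ∈ big, d i * x i ^ 2 ≤ ∑ i ∈ big, C * ν i * x i ^ 2 :=
            sum_le_sum fun i hi =>
              mul_le_mul_of_nonneg_right (mem_filter.mp hi).2 (sq_nonneg _)
        _ ≤ ∑ i, C * ν i * x i ^ 2 :=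
            sum_le_univ_sum_of_nonneg fun i =>
              mul_nonneg (mul_nonneg hC (hν i)) (sq_nonneg _)
        _ ≤ C * B := by
            simpa only [mul_assoc, ← mul_sum] using mul_le_mul_of_nonneg_left hB hC
    calc (∑ i ∈ big, d i * x i) ^ 2 ≤ (∑ i ∈ big, d i) * ∑ i ∈ big, d i * x i ^ 2 :=
          sum_sq_le_sum_mul_sum_of_sq_le_mul _ (fun i _ => hd i)
            (fun i _ => mul_nonneg (hd i) (sq_nonneg _)) fun i _ => le_of_eq (by ring)
      _ ≤ 1 * (C * B) :=
          mul_le_mul ((sum_le_univ_sum_of_nonneg hd).trans hd1) hweight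
            (sum_nonneg fun i _ => mul_nonneg (hd i) (sq_nonneg _)) zero_le_one
      _ = C * B := one_mul _
  have hsmall : |∑ i ∈ univ.filter (fun i => ¬d i ≤ C * ν i), d i * x i|
      ≤ Fintype.card ι * M * δ := by
    refine (abs_sum_le_sum_abs _ _).trans
      ((sum_le_card_nsmul _ _ (δ * M) fun i hi => ?_).trans ?_)
    · have hdδ := (hdom i).resolve_right (mem_filter.mp hi).2
      rw [abs_mul, abs_of_nonneg (hd i)]
      exact mul_le_mul hdδ (hx i) (abs_nonneg _) hδ
    · rw [nsmul_eq_mul, mul_comm (δ : ℝ), ← mul_assoc]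
      gcongr
      exact_mod_cast card_le_univ _
  rw [← sum_filter_add_sum_filter_not univ (fun i => d i ≤ C * ν i)]
  exact (abs_add_le _ _).trans (add_le_add hbig hsmall)

section EpisodicMDP

variable {S A : Type} [Fintype S] [Fintype A]

lemma valAux_mem_Icc {P : ℕ → S → A → S → ℝ} {r : ℕ → S → A → ℝ} (π : EpiPolicy S A)
    (hP : ∀ h s a, (∀ s', 0 ≤ P h s a s') ∧ ∑ s', P h s a s' = 1)
    (hr : ∀ h s a, r h s a ∈ Set.Icc (0 : ℝ) 1) :
    ∀ (k : ℕ) h s, valAux P r π k h s ∈ Set.Icc (0 : ℝ) k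
  | 0, _, _ => by simp [valAux]
  | k + 1, h, s => by
    refine sum_mul_mem_Icc_of_sum_eq_one (π.nonneg s h) (π.sum_one s h) fun a => ?_
    obtain ⟨hPV0, hPVk⟩ := sum_mul_mem_Icc_of_sum_eq_one (hP h s a).1 (hP h s a).2
      (valAux_mem_Icc π hP hr k (h + 1))
    obtain ⟨hr0, hr1⟩ := hr h s a
    push_cast
    constructor <;> linarith

variable (P : ℕ → S → A → S → ℝ) (μ : S → ℝ) (π : EpiPolicy S A)

/-- The `𝒮`-marginal of `occ P μ π h`, i.e. the law of the state at (0-indexed) step `h`. -/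
noncomputable def stateOcc : ℕ → S → ℝ
  | 0 => μ
  | h + 1 => fun s' => ∑ q : S × A, occ P μ π h q * P h q.1 q.2 s'

lemma occ_eq_stateOcc_mul :
    ∀ h (q : S × A), occ P μ π h q = stateOcc P μ π h q.1 * π.p q.1 h q.2
  | 0, _ => rfl
  | h + 1, _ => by simp [occ, stateOcc, sum_mul]

lemma sum_stateOcc_succ_mul (h : ℕ) (g : S → ℝ) :
    ∑ s', stateOcc P μ π (h + 1) s' * g s'
      = ∑ q : S × A, occ P μ π h q * ∑ s', P h q.1 q.2 s' * g s' := by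
  simp only [stateOcc, sum_mul, mul_sum]
  rw [sum_comm]
  simp only [mul_assoc]

lemma sum_stateOcc_mul_valAux_succ (Q : ℕ → S → A → S → ℝ) (r : ℕ → S → A → ℝ)
    (k h : ℕ) :
    ∑ s, stateOcc P μ π h s * valAux Q r π (k + 1) h s
      = ∑ q : S × A, occ P μ π h q *
          (r h q.1 q.2 + ∑ s', Q h q.1 q.2 s' * valAux Q r π k (h + 1) s') := by
  rw [Fintype.sum_prod_type]
  simp only [valAux, occ_eq_stateOcc_mul, mul_sum, mul_assoc]

/-- The simulation lemma, obtained by telescoping `∑ s, stateOcc P μ π h s * V_Q(h, s)`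
over the steps `h`. -/
lemma sum_mul_valAux_eq_sum_occ (Q : ℕ → S → A → S → ℝ) (r : ℕ → S → A → ℝ) (H : ℕ) :
    ∑ s, μ s * valAux Q r π H 0 s
      = ∑ h ∈ range H, ∑ q : S × A, occ P μ π h q *
          (r h q.1 q.2 + ∑ s', (Q h q.1 q.2 s' - P h q.1 q.2 s')
            * valAux Q r π (H - (h + 1)) (h + 1) s') := by
  have htele := sum_range_sub'
    (fun h => ∑ s, stateOcc P μ π h s * valAux Q r π (H - h) h s) H
  simp only [Nat.sub_zero, Nat.sub_self, valAux, mul_zero, sum_const_zero, sub_zero] at htele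
  change _ = ∑ s, μ s * _ at htele
  rw [← htele]
  refine sum_congr rfl fun h hh => ?_
  rw [show H - h = H - (h + 1) + 1 by have := mem_range.mp hh; omega,
    sum_stateOcc_mul_valAux_succ, sum_stateOcc_succ_mul, ← sum_sub_distrib]
  refine sum_congr rfl fun q _ => ?_
  simp only [sub_mul, sum_sub_distrib]
  ring

lemma return_sub_return_eq (Q : ℕ → S → A → S → ℝ) (r : ℕ → S → A → ℝ) (H : ℕ) :
    (∑ s, μ s * valAux Q r π H 0 s) - ∑ s, μ s * valAux P r π H 0 s
      = ∑ h ∈ range H, ∑ q : S × A, occ P μ π h q *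
          ∑ s', (Q h q.1 q.2 s' - P h q.1 q.2 s')
            * valAux Q r π (H - (h + 1)) (h + 1) s' := by
  rw [sum_mul_valAux_eq_sum_occ P μ π Q, sum_mul_valAux_eq_sum_occ P μ π P,
    ← sum_sub_distrib]
  refine sum_congr rfl fun h _ => ?_
  rw [← sum_sub_distrib]
  refine sum_congr rfl fun q _ => ?_
  simp only [sub_self, zero_mul, sum_const_zero, add_zero]
  ring

variable {P μ}

lemma occ_nonneg (hP : ∀ h s a s', 0 ≤ P h s a s') (hμ : ∀ s, 0 ≤ μ s) :
    ∀ h q, 0 ≤ occ P μ π h q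
  | 0, _ => mul_nonneg (hμ _) (π.nonneg _ _ _)
  | h + 1, _ => sum_nonneg fun _ _ =>
      mul_nonneg (mul_nonneg (occ_nonneg hP hμ h _) (hP _ _ _ _)) (π.nonneg _ _ _)

lemma sum_occ_eq_one (hP : ∀ h s a, ∑ s', P h s a s' = 1) (hμ : ∑ s, μ s = 1) (h : ℕ) :
    ∑ q : S × A, occ P μ π h q = 1 := by
  have hmarginal : ∑ q : S × A, occ P μ π h q = ∑ s, stateOcc P μ π h s := by
    simp only [Fintype.sum_prod_type, occ_eq_stateOcc_mul, ← mul_sum, π.sum_one, mul_one]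
  rw [hmarginal]
  cases h with
  | zero => exact hμ
  | succ h =>
    have hstep := sum_stateOcc_succ_mul P μ π h 1
    simp only [Pi.one_apply, mul_one, hP] at hstep
    rw [hstep, sum_occ_eq_one hP hμ h]

lemma occ_le_iSup (hP : ∀ h s a, (∀ s', 0 ≤ P h s a s') ∧ ∑ s', P h s a s' = 1)
    (hμ : (∀ s, 0 ≤ μ s) ∧ ∑ s, μ s = 1) (h : ℕ) (q : S × A) :
    occ P μ π h q ≤ ⨆ π' : EpiPolicy S A, occ P μ π' h q := by
  refine le_ciSup (f := fun π' => occ P μ π' h q) ⟨1, ?_⟩ π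
  rintro _ ⟨π', rfl⟩
  rw [← sum_occ_eq_one π' (fun h s a => (hP h s a).2) hμ.2 h]
  exact single_le_sum (fun q _ => occ_nonneg π' (fun h s a => (hP h s a).1) hμ.1 h q)
    (mem_univ q)

end EpisodicMDP

theorem deterministic_evaluation_error_bound_general
    (S A : Type) [Fintype S] [Fintype A]
    (H : ℕ) (P Phat : ℕ → S → A → S → ℝ) (μ : S → ℝ)
    (hP : ∀ h s a, (∀ s', 0 ≤ P h s a s') ∧ ∑ s', P h s a s' = 1)
    (hPhat : ∀ h s a, (∀ s', 0 ≤ Phat h s a s') ∧ ∑ s', Phat h s a s' = 1)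
    (hμ : (∀ s, 0 ≤ μ s) ∧ ∑ s, μ s = 1)
    (δ C B : ℝ) (hδ : 0 < δ) (hC : 0 ≤ C)
    (μh : ℕ → S × A → ℝ)
    (hμh : ∀ h < H, (∀ q, 0 ≤ μh h q) ∧ ∑ q, μh h q = 1)
    (hsig : ∀ h < H, ∀ q : S × A,
      δ ≤ (⨆ π' : EpiPolicy S A, occ P μ π' h q) →
        (⨆ π' : EpiPolicy S A, occ P μ π' h q) ≤ C * μh h q)
    (hconc : ∀ h < H, ∀ G : S → ℝ, (∀ s, 0 ≤ G s ∧ G s ≤ H) →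
      ∑ q : S × A, μh h q *
        (∑ s', (Phat h q.1 q.2 s' - P h q.1 q.2 s') * G s') ^ 2 ≤ B) :
    ∀ (π : EpiPolicy S A) (r : ℕ → S → A → ℝ),
      (∀ h s a, r h s a ∈ Set.Icc (0 : ℝ) 1) →
      |(∑ s, μ s * valAux Phat r π H 0 s) - ∑ s, μ s * valAux P r π H 0 s| ≤
        H * Real.sqrt (C * B) +
          (Fintype.card S : ℝ) * (Fintype.card A) * H ^ 2 * δ := by
  intro π r hr
  have hstep : ∀ h < H, |∑ q : S × A, occ P μ π h q * ∑ s',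
      (Phat h q.1 q.2 s' - P h q.1 q.2 s') * valAux Phat r π (H - (h + 1)) (h + 1) s'|
        ≤ √(C * B) + Fintype.card (S × A) * H * δ := by
    intro h hh
    have hV (s : S) : valAux Phat r π (H - (h + 1)) (h + 1) s ∈ Set.Icc (0 : ℝ) H :=
      Set.Icc_subset_Icc_right (by exact_mod_cast Nat.sub_le H (h + 1))
        (valAux_mem_Icc π hPhat hr _ _ s)
    have hdom (q : S × A) : occ P μ π h q ≤ δ ∨ occ P μ π h q ≤ C * μh h q := by
      by_cases hq : δ ≤ ⨆ π' : EpiPolicy S A, occ P μ π' h q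
      · exact Or.inr ((occ_le_iSup π hP hμ h q).trans (hsig h hh q hq))
      · exact Or.inl ((occ_le_iSup π hP hμ h q).trans (not_le.mp hq).le)
    exact abs_sum_mul_le_sqrt_add_card_mul (occ_nonneg π (fun h s a => (hP h s a).1) hμ.1 h)
      (sum_occ_eq_one π (fun h s a => (hP h s a).2) hμ.2 h).le (hμh h hh).1 hC
      (Nat.cast_nonneg H) hδ.le hdom
      (fun q => abs_sum_sub_mul_le_of_sum_eq_one (hPhat h q.1 q.2).1 (hPhat h q.1 q.2).2
        (hP h q.1 q.2).1 (hP h q.1 q.2).2 hV)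
      (hconc h hh _ hV)
  rw [return_sub_return_eq]
  calc _ ≤ _ := abs_sum_le_sum_abs _ _
    _ ≤ ∑ _h ∈ range H, (√(C * B) + Fintype.card (S × A) * H * δ) :=
        sum_le_sum fun h hh => hstep h (mem_range.mp hh)
    _ = _ := by rw [sum_const, card_range, nsmul_eq_mul, Fintype.card_prod]; push_cast; ring

/-- **Deterministic evaluation-error bound (core of Lemma B.6).**
Assume (i) for every step `h < H` and every `(s,a)` with `sup_{π'} d_h^{π'}(s,a) ≥ δ`
one has `sup_{π'} d_h^{π'}(s,a) ≤ C·μ_h(s,a)`, and (ii) for every `h < H` and every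
`G : 𝒮 → [0,H]`, `∑_{(s,a)} μ_h(s,a)·((P̂_h − P_h)G (s,a))² ≤ B`.  Then for every
policy `π` and every reward with values in `[0,1]`:
`|Ĵ(π;r) − J(π;r)| ≤ H·√(C·B) + S·A·H²·δ`. -/
theorem deterministic_evaluation_error_bound
    (S A : Type) [Fintype S] [Fintype A]
    (H : ℕ) (P Phat : ℕ → S → A → S → ℝ) (μ : S → ℝ)
    (hP : ∀ h s a, (∀ s', 0 ≤ P h s a s') ∧ ∑ s', P h s a s' = 1)
    (hPhat : ∀ h s a, (∀ s', 0 ≤ Phat h s a s') ∧ ∑ s', Phat h s a s' = 1)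
    (hμ : (∀ s, 0 ≤ μ s) ∧ ∑ s, μ s = 1)
    (δ C B : ℝ) (hδ : 0 < δ) (hC : 0 ≤ C) (hB : 0 ≤ B)
    (μh : ℕ → S × A → ℝ)
    (hμh : ∀ h < H, (∀ q, 0 ≤ μh h q) ∧ ∑ q, μh h q = 1)
    (hsig : ∀ h < H, ∀ q : S × A,
      δ ≤ (⨆ π' : EpiPolicy S A, occ P μ π' h q) →
        (⨆ π' : EpiPolicy S A, occ P μ π' h q) ≤ C * μh h q)
    (hconc : ∀ h < H, ∀ G : S → ℝ, (∀ s, 0 ≤ G s ∧ G s ≤ H) →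
      ∑ q : S × A, μh h q *
        (∑ s', (Phat h q.1 q.2 s' - P h q.1 q.2 s') * G s') ^ 2 ≤ B) :
    ∀ (π : EpiPolicy S A) (r : ℕ → S → A → ℝ),
      (∀ h s a, r h s a ∈ Set.Icc (0 : ℝ) 1) →
      |(∑ s, μ s * valAux Phat r π H 0 s) - ∑ s, μ s * valAux P r π H 0 s| ≤
        H * Real.sqrt (C * B) +
          (Fintype.card S : ℝ) * (Fintype.card A) * H ^ 2 * δ :=
  deterministic_evaluation_error_bound_general S A H P Phat μ hP hPhat hμ δ C B hδ hC μh hμh hsig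
    hconc
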